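/- arXiv:1903.10701 — 2 statements merged into one kernel-verified Lean document; each statement's English description precedes it below -/
import Mathlib

section
/- For every integer n ≥ 5 and every non-hub seed ψ = (n, a_2, …, a_{n−1}): hub(ψ) = (n, b, b⊖1, b⊖2, …, b⊖(n−3)), where b = a_2 ⊕ level(ψ) (here a ⊕ j denotes j-fold application of the cyclic successor ⊕). -/
/-- `σ`: cyclic left shift by one position. -/
def sig (l : List ℕ) : List ℕ := l.rotate 1

/-- `τ`: transposition of the first two entries. -/
def tau : List ℕ → List ℕ
  | a :: b :: rest => b :: a :: rest
  | l => l

/-- Apply a word over the alphabet {σ,τ} (encoded: `false` = σ, `true` = τ)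
letter by letter, from left to right. -/
def applyWord (w : List Bool) (l : List ℕ) : List ℕ :=
  w.foldl (fun p c => if c then tau p else sig p) l

/-- `l` is an n-permutation: a sequence containing each of 1,…,n exactly once. -/
def IsPerm (n : ℕ) (l : List ℕ) : Prop := l.Perm (List.range' 1 n)

/-- The permutation (n, n−1, …, 1). -/
def descList (n : ℕ) : List ℕ := (List.range n).reverse.map (· + 1)

/-- Cyclic successor ⊕1 on {1,…,n−1}. -/
def osucc (n a : ℕ) : ℕ := if a = n - 1 then 1 else a + 1

/-- Cyclic predecessor ⊖1 on {1,…,n−1}. -/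
def opred (n a : ℕ) : ℕ := if a = 1 then n - 1 else a - 1

/-- From a seed (a₁, a₂, …, a_{n−1}) form (a₁, a₂⊕1, a₂, …, a_{n−1}). -/
def seedToPerm (n : ℕ) : List ℕ → List ℕ
  | a1 :: a2 :: rest => a1 :: osucc n a2 :: a2 :: rest
  | l => l

/-- ψ is a seed: an (n−1)-tuple of distinct elements of {1,…,n} with first entry n
such that (a₁, a₂⊕1, a₂, …, a_{n−1}) is an n-permutation. -/
def IsSeed (n : ℕ) (ψ : List ℕ) : Prop :=
  ψ.length = n - 1 ∧ ψ.head? = some n ∧ IsPerm n (seedToPerm n ψ)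

/-- The missing element mis(ψ) = a₂⊕1. -/
def mis (n : ℕ) (ψ : List ℕ) : ℕ := osucc n (ψ.getD 1 0)

/-- The package perms(ψ): all permutations obtained by inserting mis(ψ)
at any position of ψ and then taking any cyclic shift. -/
def perms (n : ℕ) (ψ : List ℕ) : Set (List ℕ) :=
  { π | ∃ i j, i ≤ ψ.length ∧ π = (ψ.insertIdx i (mis n ψ)).rotate j }

/-- cycle(π): the set of cyclic shifts of π. -/
def cycle (π : List ℕ) : Set (List ℕ) := { ρ | ∃ j, ρ = π.rotate j }

/-- ψ̃ = (a₁, mis(ψ), a₂, …, a_{n−1}). -/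
def tildeSeed (n : ℕ) (ψ : List ℕ) : List ℕ :=
  match ψ with
  | a1 :: rest => a1 :: mis n ψ :: rest
  | [] => []

/-- ψ^(i) (for 1 ≤ i ≤ n−1): the right cyclic shift of ψ by i−1 positions
with mis(ψ) prepended; for i = n−1 this is (x, a₂, …, a_{n−1}, a₁). -/
def seedShift (n : ℕ) (ψ : List ℕ) (i : ℕ) : List ℕ := mis n ψ :: ψ.rotate (n - i)

/-- Length of the maximal initial run a = b⊕1 in a list. -/
def decRun (n : ℕ) : List ℕ → ℕ
  | a :: b :: rest => if a = osucc n b then decRun n (b :: rest) + 1 else 1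
  | [_] => 1
  | [] => 0

/-- height(ψ): the largest k with aᵢ = a_{i+1}⊕1 for all 2 ≤ i ≤ k. -/
def height (n : ℕ) (ψ : List ℕ) : ℕ := decRun n ψ.tail

/-- The hub seed (n, b, b⊖1, …, b⊖(n−3)). -/
def hubSeed (n b : ℕ) : List ℕ := n :: (List.range (n - 2)).map (fun j => (opred n)^[j] b)

/-- Hubₙ: the set of hub seeds. -/
def Hub (n : ℕ) : Set (List ℕ) := { ψ | ∃ b, 1 ≤ b ∧ b ≤ n - 1 ∧ ψ = hubSeed n b }

/-- `IsParent n ψ β` means ψ = parent(β): ψ, β are neighboring distinct seeds,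
height(ψ) > 1 and mis(ψ) = mis(β)⊕1. -/
def IsParent (n : ℕ) (par child : List ℕ) : Prop :=
  IsSeed n par ∧ IsSeed n child ∧ par ≠ child ∧
  (perms n par ∩ perms n child).Nonempty ∧
  1 < height n par ∧ mis n par = osucc n (mis n child)

/-- `IsSon n β ψ i` means β = son(ψ, i), i.e. β is a seed with σ^i(ψ^(i)) = β̃. -/
def IsSon (n : ℕ) (child par : List ℕ) (i : ℕ) : Prop :=
  IsSeed n child ∧ sig^[i] (seedShift n par i) = tildeSeed n child

/-- γ_k = σ^k τ. -/
def gam (k : ℕ) : List Bool := List.replicate k false ++ [true]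

/-- W_0 = σ and W_k = τ · ∏_{i=1}^{n−2} σ^i W_{Δ(k,i)} γ_{n−2−i},
where Δ(k,i) = min(k−1, n−2−i). -/
def W (n : ℕ) : ℕ → List Bool
  | 0 => [false]
  | k + 1 => true :: ((List.range (n - 2)).map (fun j =>
      List.replicate (j + 1) false ++ W n (min k (n - 2 - (j + 1))) ++
        gam (n - 2 - (j + 1)))).flatten
  termination_by k => k
  decreasing_by omega

/-- V_n = γ_{n−3} · ∏_{i=2}^{n−3} σ^i W_{Δ(n−3,i)} γ_{n−2−i} · σ^{n−1}. -/
def V (n : ℕ) : List Bool :=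
  gam (n - 3) ++
  ((List.range (n - 4)).map (fun j =>
    List.replicate (j + 2) false ++ W n (min (n - 4) (n - 2 - (j + 2))) ++
      gam (n - 2 - (j + 2)))).flatten ++
  List.replicate (n - 1) false

/-- SEQ_n = γ₁^{n−2} σ² (V_n τ)^{n−2} V_n. -/
def SEQ (n : ℕ) : List Bool :=
  (List.replicate (n - 2) (gam 1)).flatten ++ List.replicate 2 false ++
  (List.replicate (n - 2) (V n ++ [true])).flatten ++ V n

/-- r: the first element after the value n in the left-to-right cyclic reading
of π with the entry p₂ skipped. -/
def rVal (n : ℕ) (π : List ℕ) : ℕ :=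
  match π with
  | p1 :: _ :: rest =>
      let l := p1 :: rest
      l.getD ((l.idxOf n + 1) % l.length) 0
  | _ => 0

/-- The Sawada–Williams successor function `next`. -/
def swNext (n : ℕ) (π : List ℕ) : List ℕ :=
  if π = descList n then sig π
  else if π.getD 1 0 ≠ n ∧ π.getD 1 0 = osucc n (rVal n π) then tau π else sig π

/-- GEN(π, α): all permutations visited (including π) when α is applied to π. -/
def GEN (α : List Bool) (π : List ℕ) : Set (List ℕ) :=
  { ρ | ∃ t, t ≤ α.length ∧ ρ = applyWord (α.take t) π }

/-- Tree(ψ): ψ together with all seeds from which ψ is reachable by parent links. -/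
def SeedTree (n : ℕ) (ψ : List ℕ) : Set (List ℕ) :=
  { β | Relation.ReflTransGen (fun x y => IsParent n y x) β ψ }

/-- bunch(ψ) = (⋃_{β ∈ Tree(ψ)} perms(β) ∖ cycle(ψ̃)) ∪ {ψ̃, ψ^(n−1)}. -/
def bunch (n : ℕ) (ψ : List ℕ) : Set (List ℕ) :=
  ((⋃ β ∈ SeedTree n ψ, perms n β) \ cycle (tildeSeed n ψ)) ∪
    {tildeSeed n ψ, seedShift n ψ (n - 1)}

/-- rank(π): the number of initial letters of SEQ_n needed to reach π from
π₀ = τ((n, n−1, …, 1)). -/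
noncomputable def rank (n : ℕ) (π : List ℕ) : ℕ :=
  sInf { t | applyWord ((SEQ n).take t) (tau (descList n)) = π }

/-- SUM(k,j) = |τ · ∏_{i=1}^{j−1} σ^i W_{Δ(k,i)} γ_{n−2−i}| + j. -/
def SUMw (n k j : ℕ) : ℕ :=
  (true :: ((List.range (j - 1)).map (fun m =>
    List.replicate (m + 1) false ++ W n (min (k - 1) (n - 2 - (m + 1))) ++
      gam (n - 2 - (m + 1)))).flatten).length + j

/-- ord(ψ): the position of the entry mis(ψ)⊕1 in ψ, counted from the right end. -/
def ord (n : ℕ) (ψ : List ℕ) : ℕ := ψ.length - ψ.idxOf (osucc n (mis n ψ))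

/-- Length of the continuation of the maximal decreasing subsequence starting
with current value `cur`. -/
def chainLen (n : ℕ) : List ℕ → ℕ → ℕ
  | [], _ => 0
  | b :: rest, cur => if cur = osucc n b then chainLen n rest b + 1 else chainLen n rest cur

/-- level(ψ) = n − m − 3, where m+1 is the length of dec_seq(ψ). -/
def level (n : ℕ) (ψ : List ℕ) : ℕ := n - chainLen n (ψ.drop 2) (ψ.getD 1 0) - 3

/-! The quantity `a₂ ⊕ level(ψ)` is invariant along parent links. If `ψ = parent(β)`, normalising
a common permutation of their packages to start with `n` shows that `ψ = (n, a⊕1, a, t)` and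
`β = (n, a, t')`, where `t'` is `t` with `mis(ψ) = a⊕2` inserted somewhere. Since
`a⊕2 = a⊖(n−3)`, the new entry can only extend the decreasing chain of `β` as its `(n−3)`-th
element, which would make `β` the hub seed of `a`. So for non-hub `β` the chain of `β` is that
of `ψ` minus its first step: the level goes up by one while `a₂` goes down by one. A hub seed
has level `0`, so there the invariant is its own `b`. -/

namespace List

variable {α : Type*}

lemma Nodup.eq_of_cons_isRotated_cons {a : α} {u v : List α} (hnd : (a :: u).Nodup)
    (h : a :: u ~r a :: v) : u = v := by
  obtain ⟨s, hs⟩ := h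
  have hlt : s % (a :: u).length < (a :: u).length := Nat.mod_lt _ (by simp)
  have hhead := head?_rotate hlt
  rw [rotate_mod, hs, head?_cons, getElem?_eq_getElem hlt, Option.some_inj] at hhead
  have hs0 := (hnd.getElem_inj_iff (i := 0) (hi := by simp)).mp hhead
  rw [← rotate_mod, ← hs0, rotate_zero] at hs
  exact (cons_inj_right a).mp hs

lemma exists_insertIdx_cons_isRotated {a x : α} {l : List α} {i : ℕ}
    (hi : i ≤ (a :: l).length) :
    ∃ k ≤ l.length, (a :: l).insertIdx i x ~r a :: l.insertIdx k x := by
  cases i with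
  | zero =>
    refine ⟨l.length, le_rfl, ?_⟩
    rw [insertIdx_zero, insertIdx_length_self]
    exact IsRotated.cons_append_singleton
  | succ k => exact ⟨k, by simpa using hi, by rw [insertIdx_succ_cons]⟩

lemma exists_of_insertIdx_cons_cons_eq {a b c x : α} {u v : List α} {i j : ℕ}
    (hxa : x ≠ a) (hba : b ≠ a) (hbx : b ≠ x)
    (h : (a :: c :: u).insertIdx i x = (b :: v).insertIdx j a) :
    ∃ m, i = m + 2 ∧ c = b ∧ u.insertIdx m x = v := by
  rcases i with _ | _ | m <;> rcases j with _ | j <;> simp_all [eq_comm]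

end List

section Cyclic

variable {n : ℕ}

lemma osucc_ne_zero (a : ℕ) : osucc n a ≠ 0 := by
  unfold osucc; split_ifs <;> omega

lemma opred_osucc {a : ℕ} (ha : a ≠ 0) : opred n (osucc n a) = a := by
  unfold osucc opred; split_ifs <;> omega

lemma osucc_opred {c : ℕ} (h1 : 1 ≤ c) (h2 : c ≤ n - 1) : osucc n (opred n c) = c := by
  unfold osucc opred; split_ifs <;> omega

lemma one_le_opred {c : ℕ} (h1 : 1 ≤ c) (h2 : c ≤ n - 1) : 1 ≤ opred n c := by
  unfold opred; split_ifs <;> omega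

lemma opred_le {c : ℕ} (h2 : c ≤ n - 1) : opred n c ≤ n - 1 := by
  unfold opred; split_ifs <;> omega

lemma osucc_ne_self (hn : 3 ≤ n) (a : ℕ) : osucc n a ≠ a := by
  unfold osucc; split_ifs <;> omega

lemma osucc_osucc_ne_self (hn : 4 ≤ n) (a : ℕ) : osucc n (osucc n a) ≠ a := by
  unfold osucc; split_ifs <;> omega

lemma iterate_opred {c k : ℕ} (h1 : 1 ≤ c) (h2 : c ≤ n - 1) (hk : k ≤ n - 2) :
    (opred n)^[k] c = if k < c then c - k else c + (n - 1) - k := by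
  induction k generalizing c with
  | zero => simp only [Function.iterate_zero, id_eq]; split_ifs <;> omega
  | succ k ih =>
    rw [Function.iterate_succ_apply, ih (one_le_opred h1 h2) (opred_le h2) (by omega)]
    unfold opred; split_ifs <;> omega

lemma eq_sub_four_of_iterate_opred_eq {a j : ℕ} (h1 : 1 ≤ a) (h2 : a ≤ n - 1)
    (hj : j ≤ n - 4) (h : (opred n)^[j] a = osucc n (osucc n (osucc n a))) : j = n - 4 := by
  rw [iterate_opred h1 h2 (by omega)] at h
  unfold osucc at h; split_ifs at h <;> omega

end Cyclic

def opredRun (n : ℕ) : ℕ → ℕ → List ℕ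
  | _, 0 => []
  | c, k + 1 => opred n c :: opredRun n (opred n c) k

/-- The last entry of the chain counted by `chainLen n l c`. -/
def chainEnd (n : ℕ) : List ℕ → ℕ → ℕ
  | [], c => c
  | b :: rest, c => if c = osucc n b then chainEnd n rest b else chainEnd n rest c

section Chain

variable {n : ℕ}

lemma chainLen_le_length (l : List ℕ) (c : ℕ) : chainLen n l c ≤ l.length := by
  induction l generalizing c with
  | nil => simp [chainLen]
  | cons b l ih =>
    unfold chainLen
    split_ifs
    · simpa using ih b
    · exact (ih c).trans (by simp)

lemma chainEnd_eq_iterate_opred {l : List ℕ} (h0 : 0 ∉ l) (c : ℕ) :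
    chainEnd n l c = (opred n)^[chainLen n l c] c := by
  induction l generalizing c with
  | nil => rfl
  | cons b l ih =>
    have hb : b ≠ 0 := fun h => h0 (h ▸ List.mem_cons_self)
    have hl : 0 ∉ l := fun h => h0 (List.mem_cons_of_mem b h)
    unfold chainEnd chainLen
    split_ifs with h
    · rw [ih hl, Function.iterate_succ_apply, h, opred_osucc hb]
    · exact ih hl c

lemma chainLen_insertIdx_of_chainEnd_ne {l : List ℕ} {m x c : ℕ}
    (h : chainEnd n (l.take m) c ≠ osucc n x) :
    chainLen n (l.insertIdx m x) c = chainLen n l c := by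
  induction l generalizing m c with
  | nil => cases m <;> simp_all [chainEnd, chainLen]
  | cons b l ih =>
    cases m with
    | zero => simp_all [chainEnd, chainLen]
    | succ m =>
      simp only [List.take_succ_cons, chainEnd] at h
      simp only [List.insertIdx_succ_cons, chainLen]
      split_ifs at h ⊢ <;> rw [ih h]

lemma chainLen_take_lt_insertIdx {l : List ℕ} {m x c : ℕ} (hm : m ≤ l.length)
    (h : chainEnd n (l.take m) c = osucc n x) :
    chainLen n (l.take m) c < chainLen n (l.insertIdx m x) c := by
  induction l generalizing m c with
  | nil => simp_all [chainEnd, chainLen]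
  | cons b l ih =>
    cases m with
    | zero => simp_all [chainEnd, chainLen]
    | succ m =>
      simp only [List.take_succ_cons, chainEnd] at h
      simp only [List.take_succ_cons, List.insertIdx_succ_cons, chainLen]
      have hm' : m ≤ l.length := by simpa using hm
      split_ifs at h ⊢ <;> simpa using ih hm' h

lemma eq_opredRun_of_chainLen_eq_length {l : List ℕ} (h0 : 0 ∉ l) {c : ℕ}
    (h : chainLen n l c = l.length) : l = opredRun n c l.length := by
  induction l generalizing c with
  | nil => rfl
  | cons b l ih =>
    have hb : b ≠ 0 := fun h => h0 (h ▸ List.mem_cons_self)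
    have hl : 0 ∉ l := fun h => h0 (List.mem_cons_of_mem b h)
    unfold chainLen at h
    split_ifs at h with hc
    · subst hc
      rw [List.length_cons, opredRun, opred_osucc hb, ← ih hl (by simpa using h)]
    · have := chainLen_le_length (n := n) l c
      simp only [List.length_cons] at h
      omega

lemma chainLen_opredRun {c : ℕ} (h1 : 1 ≤ c) (h2 : c ≤ n - 1) (k : ℕ) :
    chainLen n (opredRun n c k) c = k := by
  induction k generalizing c with
  | zero => rfl
  | succ k ih =>
    rw [opredRun, chainLen, if_pos (osucc_opred h1 h2).symm,
      ih (one_le_opred h1 h2) (opred_le h2)]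

lemma chainLen_insertIdx_eq_or (hn : 4 ≤ n) {c m : ℕ} {t : List ℕ} (h1 : 1 ≤ c) (h2 : c ≤ n - 1)
    (h0 : 0 ∉ t) (ht : t.length = n - 4) (hm : m ≤ t.length) :
    chainLen n (t.insertIdx m (osucc n (osucc n c))) c = chainLen n t c ∨
      chainLen n (t.insertIdx m (osucc n (osucc n c))) c = n - 3 := by
  by_cases hend : chainEnd n (t.take m) c = osucc n (osucc n (osucc n c))
  · right
    have hlt := chainLen_take_lt_insertIdx hm hend
    have hj : chainLen n (t.take m) c ≤ n - 4 :=
      (chainLen_le_length _ _).trans (by simp only [List.length_take]; omega)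
    rw [chainEnd_eq_iterate_opred (fun h => h0 (List.mem_of_mem_take h))] at hend
    have hj' := eq_sub_four_of_iterate_opred_eq h1 h2 hj hend
    have hle := chainLen_le_length (n := n) (t.insertIdx m (osucc n (osucc n c))) c
    rw [List.length_insertIdx_of_le_length hm] at hle
    omega
  · exact Or.inl (chainLen_insertIdx_of_chainEnd_ne hend)

end Chain

section Seeds

variable {n : ℕ}

lemma subset_seedToPerm (ψ : List ℕ) : ψ ⊆ seedToPerm n ψ := by
  match ψ with
  | _ :: _ :: _ => exact (List.sublist_cons_self _ _).cons_cons _ |>.subset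
  | [] | [_] => exact List.Subset.refl _

lemma IsSeed.nodup {ψ : List ℕ} (h : IsSeed n ψ) : (seedToPerm n ψ).Nodup :=
  h.2.2.nodup_iff.2 List.nodup_range'

lemma IsSeed.pos_of_mem {ψ : List ℕ} (h : IsSeed n ψ) {b : ℕ} (hb : b ∈ ψ) : 0 < b := by
  have := h.2.2.mem_iff.1 (subset_seedToPerm ψ hb)
  simp only [List.mem_range'] at this
  omega

lemma IsSeed.lt_of_mem_tail {a : ℕ} {l : List ℕ} (h : IsSeed n (n :: a :: l)) {b : ℕ}
    (hb : b ∈ a :: l) : b < n := by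
  have hle := h.2.2.mem_iff.1 (subset_seedToPerm _ (List.mem_cons_of_mem n hb))
  have hne : b ≠ n := by
    rintro rfl
    exact (List.nodup_cons.1 h.nodup).1 (List.mem_cons_of_mem _ hb)
  simp only [List.mem_range'] at hle
  omega

lemma IsSeed.exists_eq_cons_cons_cons (hn : 4 ≤ n) {ψ : List ℕ} (h : IsSeed n ψ) :
    ∃ a b t, ψ = n :: a :: b :: t := by
  obtain ⟨hlen, hhead, -⟩ := h
  match ψ, hlen, hhead with
  | _ :: a :: b :: t, _, hhead => exact ⟨a, b, t, by rw [Option.some_inj.1 hhead]⟩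
  | [], hlen, _ | [_], hlen, _ | [_, _], hlen, _ => simp at hlen; omega

lemma eq_osucc_of_one_lt_height {a₁ a b : ℕ} {t : List ℕ}
    (h : 1 < height n (a₁ :: a :: b :: t)) : a = osucc n b := by
  by_contra hne
  simp [height, decRun, hne] at h

lemma exists_isRotated_of_mem_perms {a : ℕ} {l π : List ℕ} (h : π ∈ perms n (a :: l)) :
    ∃ k ≤ l.length, π ~r a :: l.insertIdx k (mis n (a :: l)) := by
  obtain ⟨i, j, hi, rfl⟩ := h
  obtain ⟨k, hk, hrot⟩ := List.exists_insertIdx_cons_isRotated (x := mis n (a :: l)) hi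
  exact ⟨k, hk, (List.IsRotated.forall _ j).trans hrot⟩

lemma hubSeed_eq_cons_opredRun (hn : 3 ≤ n) (b : ℕ) :
    hubSeed n b = n :: b :: opredRun n b (n - 3) := by
  suffices ∀ k c, (List.range (k + 1)).map (fun j => (opred n)^[j] c) = c :: opredRun n c k by
    rw [hubSeed, show n - 2 = n - 3 + 1 by omega, this]
  intro k
  induction k with
  | zero => intro c; rfl
  | succ k ih =>
    intro c
    rw [List.range_succ_eq_map, List.map_cons, List.map_map]
    simp only [Function.comp_def, Function.iterate_succ_apply]
    rw [ih, opredRun]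
    rfl

def hubValue (n : ℕ) (ψ : List ℕ) : ℕ := (osucc n)^[level n ψ] (ψ.getD 1 0)

lemma hubValue_hubSeed (hn : 3 ≤ n) {b : ℕ} (h1 : 1 ≤ b) (h2 : b ≤ n - 1) :
    hubValue n (hubSeed n b) = b := by
  have hlevel : level n (hubSeed n b) = 0 := by
    rw [hubSeed_eq_cons_opredRun hn, level]
    simp only [List.drop_succ_cons, List.drop_zero, List.getD_cons_succ, List.getD_cons_zero]
    rw [chainLen_opredRun h1 h2]
    omega
  rw [hubValue, hlevel, hubSeed_eq_cons_opredRun hn]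
  rfl

end Seeds

section Parent

variable {n : ℕ}

lemma IsParent.exists_eq_insertIdx (hn : 4 ≤ n) {par β : List ℕ} (hp : IsParent n par β) :
    ∃ a t m, m ≤ t.length ∧ par = n :: osucc n a :: a :: t ∧
      β = n :: a :: t.insertIdx m (osucc n (osucc n a)) := by
  obtain ⟨hpar, hβ, -, ⟨π, hπ⟩, hheight, hmis⟩ := hp
  obtain ⟨a₂, a₃, t, rfl⟩ := hpar.exists_eq_cons_cons_cons hn
  obtain ⟨b₂, b₃, v, rfl⟩ := hβ.exists_eq_cons_cons_cons hn
  have ha₂ : a₂ = osucc n a₃ := eq_osucc_of_one_lt_height hheight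
  have hb₂ : a₂ = osucc n b₂ := by
    have := congrArg (opred n) hmis
    rwa [mis, mis, opred_osucc (hpar.pos_of_mem (by simp)).ne', opred_osucc (osucc_ne_zero _)]
      at this
  obtain ⟨k, hk, hπk⟩ := exists_isRotated_of_mem_perms hπ.1
  obtain ⟨k', -, hπk'⟩ := exists_isRotated_of_mem_perms hπ.2
  have hnodup : (n :: (a₂ :: a₃ :: t).insertIdx k (osucc n a₂)).Nodup :=
    ((List.perm_insertIdx _ _ hk).cons n).nodup_iff.2 hpar.nodup
  have heq := hnodup.eq_of_cons_isRotated_cons (hπk.symm.trans hπk')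
  change _ = List.insertIdx _ k' (osucc n b₂) at heq
  rw [← hb₂] at heq
  have hxa : osucc n a₂ ≠ a₂ := osucc_ne_self (by omega) a₂
  have hba : b₂ ≠ a₂ := fun h => hxa (h ▸ hb₂).symm
  have hbx : b₂ ≠ osucc n a₂ := fun h => osucc_osucc_ne_self hn a₂ (h ▸ hb₂).symm
  obtain ⟨m, rfl, rfl, hins⟩ := List.exists_of_insertIdx_cons_cons_eq hxa hba hbx heq
  exact ⟨a₃, t, m, by simpa using hk, by rw [ha₂], by rw [← hins, ha₂]⟩

lemma level_add_one_of_not_mem_hub (hn : 4 ≤ n) {a m : ℕ} {t : List ℕ}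
    (hpar : IsSeed n (n :: osucc n a :: a :: t)) (hm : m ≤ t.length)
    (hβ : n :: a :: t.insertIdx m (osucc n (osucc n a)) ∉ Hub n) :
    level n (n :: osucc n a :: a :: t) + 1 =
      level n (n :: a :: t.insertIdx m (osucc n (osucc n a))) := by
  have ht : t.length = n - 4 := by have := hpar.1; simp only [List.length_cons] at this; omega
  have h0 : 0 ∉ t := fun h => (hpar.pos_of_mem (by simp [h])).ne rfl
  have h1 : 1 ≤ a := hpar.pos_of_mem (by simp)
  have h2 : a ≤ n - 1 := by have := hpar.lt_of_mem_tail (b := a) (by simp); omega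
  have hchain := chainLen_le_length (n := n) t a
  rcases chainLen_insertIdx_eq_or hn h1 h2 h0 ht hm with h | h
  · change n - chainLen n (a :: t) (osucc n a) - 3 + 1 =
      n - chainLen n (t.insertIdx m (osucc n (osucc n a))) a - 3
    rw [chainLen, if_pos rfl, h]
    omega
  · refine absurd ⟨a, h1, h2, ?_⟩ hβ
    have hlen : (t.insertIdx m (osucc n (osucc n a))).length = n - 3 := by
      rw [List.length_insertIdx_of_le_length hm]; omega
    have h0' : 0 ∉ t.insertIdx m (osucc n (osucc n a)) := fun h =>
      (List.eq_or_mem_of_mem_insertIdx h).elim (fun h => osucc_ne_zero _ h.symm) h0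
    rw [hubSeed_eq_cons_opredRun (by omega),
      eq_opredRun_of_chainLen_eq_length h0' (h.trans hlen.symm), hlen]

lemma IsParent.hubValue_eq (hn : 4 ≤ n) {par β : List ℕ} (hp : IsParent n par β)
    (hβ : β ∉ Hub n) : hubValue n par = hubValue n β := by
  obtain ⟨a, t, m, hm, rfl, rfl⟩ := hp.exists_eq_insertIdx hn
  rw [hubValue, hubValue, ← level_add_one_of_not_mem_hub hn hp.1 hm hβ,
    Function.iterate_succ_apply]
  rfl

end Parent

theorem hub_of_seed_general (n : ℕ) (hn : 5 ≤ n) (ψ : List ℕ) (r : ℕ) (seq : ℕ → List ℕ) (h0 : seq 0 = ψ)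
    (hstep : ∀ i < r, IsParent n (seq (i + 1)) (seq i))
    (hnonhub : ∀ i ≤ r, seq i ∉ Hub n)
    (φ : List ℕ) (hφ : φ ∈ Hub n) (hpar : IsParent n φ (seq r)) :
    φ = hubSeed n ((osucc n)^[level n ψ] (ψ.getD 1 0)) := by
  have hinv : ∀ i ≤ r, hubValue n (seq i) = hubValue n ψ := by
    intro i hi
    induction i with
    | zero => rw [h0]
    | succ i ih =>
      rw [(hstep i hi).hubValue_eq (by omega) (hnonhub i (by omega)), ih (by omega)]
  obtain ⟨b, hb1, hb2, rfl⟩ := hφ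
  have hb := hpar.hubValue_eq (by omega) (hnonhub r le_rfl)
  rw [hubValue_hubSeed (by omega) hb1 hb2, hinv r le_rfl] at hb
  rw [hb, hubValue]

/-- for a non-hub seed ψ = (n, a₂, …, a_{n−1}),
hub(ψ) = (n, b, b⊖1, …, b⊖(n−3)) where b = a₂ ⊕ level(ψ). -/
theorem hub_of_seed (n : ℕ) (hn : 5 ≤ n) (ψ : List ℕ) (hψ : IsSeed n ψ)
    (hnh : ψ ∉ Hub n) (r : ℕ) (seq : ℕ → List ℕ) (h0 : seq 0 = ψ)
    (hstep : ∀ i < r, IsParent n (seq (i + 1)) (seq i))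
    (hnonhub : ∀ i ≤ r, seq i ∉ Hub n)
    (φ : List ℕ) (hφ : φ ∈ Hub n) (hpar : IsParent n φ (seq r)) :
    φ = hubSeed n ((osucc n)^[level n ψ] (ψ.getD 1 0)) :=
  hub_of_seed_general n hn ψ r seq h0 hstep hnonhub φ hφ hpar
end

section
/- For every integer n ≥ 5 and every n-permutation π = (p_1, …, p_n) such that deleting the entry n from π yields a cyclic shift of (n−1, n−2, …, 1) and n occupies position 1 or position 2 of π: if π = (n, n−1, …, 1) then rank(π) = 2n−3; otherwise, if n is in position 1 then rank(π) = 2(n − p_2 − 1) − 1, and if n is in position 2 then rank(π) = 2(n − p_1 − 1). -/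
/-!
Up to step `2n − 3`, `SEQ n` reads `(στ)^(n−2) σ`. Writing `ρ_m` for the rotation by `m` of
`(n−1, …, 1)`, the walk from `π₀` is therefore `ρ_m` with `n` inserted in position 2 after `2m`
letters, and `n` followed by `ρ_(m+1)` after `2m + 1` letters; the last of these is
`(n, n−1, …, 1)`. Since `ρ_0, …, ρ_(n−2)` are distinct, these `2n − 2` permutations are pairwise
distinct, so each is first visited at the step where it appears; the permutations of the
statement are exactly them.
-/

lemma applyWord_append (w v : List Bool) (l : List ℕ) :
    applyWord (w ++ v) l = applyWord v (applyWord w l) :=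
  List.foldl_append

lemma sig_cons (a : ℕ) (l : List ℕ) : sig (a :: l) = l ++ [a] := by
  simp [sig]

lemma rotate_succ_of_rotate_eq_cons {l s : List ℕ} {m a : ℕ} (h : l.rotate m = a :: s) :
    l.rotate (m + 1) = s ++ [a] := by
  rw [← List.rotate_rotate, h, ← sig, sig_cons]

lemma List.eq_cons_of_getD_zero {α : Type*} {l : List α} {a d : α} (ha : a ≠ d)
    (h : l.getD 0 d = a) : l = a :: l.tail := by
  rcases l with _ | ⟨b, l⟩
  · exact absurd h.symm ha
  · rw [← h]
    rfl

lemma List.exists_eq_cons_cons_of_getD_one {α : Type*} {l : List α} {a d : α} (ha : a ≠ d)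
    (h : l.getD 1 d = a) : ∃ b rest, l = b :: a :: rest := by
  rcases l with _ | ⟨b, _ | ⟨c, rest⟩⟩
  · exact absurd h.symm ha
  · exact absurd h.symm ha
  · exact ⟨b, rest, by rw [← h]; rfl⟩

lemma length_descList (k : ℕ) : (descList k).length = k := by
  simp [descList]

lemma descList_succ (k : ℕ) : descList (k + 1) = (k + 1) :: descList k := by
  simp [descList, List.range_succ]

lemma descList_eq_cons_pred {k : ℕ} (h : 0 < k) : descList k = k :: descList (k - 1) := by
  obtain ⟨k, rfl⟩ := Nat.exists_eq_add_of_le' h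
  exact descList_succ k

lemma descList_getElem? {k i : ℕ} (h : i < k) : (descList k)[i]? = some (k - i) := by
  simp only [descList, List.map_reverse, List.length_reverse, List.length_map, List.length_range, h,
    getElem?_pos, List.getElem_reverse, List.getElem_map, List.getElem_range, Option.some.injEq]
  omega

lemma descList_getD_one {n : ℕ} (hn : 2 ≤ n) : (descList n).getD 1 0 = n - 1 := by
  simp [List.getD_eq_getElem?_getD, descList_getElem? (show 1 < n by omega)]

lemma descList_rotate_eq_cons {k m : ℕ} (h : m < k) :
    (descList k).rotate m = (k - m) :: ((descList k).rotate m).tail := by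
  apply List.eq_cons_of_mem_head?
  rw [List.head?_rotate (by rwa [length_descList]), descList_getElem? h]
  rfl

lemma descList_rotate_inj {k a b : ℕ} (ha : a < k) (hb : b < k)
    (h : (descList k).rotate a = (descList k).rotate b) : a = b := by
  rw [descList_rotate_eq_cons ha, descList_rotate_eq_cons hb, List.cons.injEq] at h
  omega

lemma exists_lt_erase_eq_rotate {n : ℕ} {π : List ℕ} (hn : 2 ≤ n)
    (h : ∃ j, π.erase n = (descList (n - 1)).rotate j) :
    ∃ j < n - 1, π.erase n = (descList (n - 1)).rotate j := by
  obtain ⟨j, h⟩ := h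
  refine ⟨j % (n - 1), Nat.mod_lt _ (by omega), ?_⟩
  rw [h, ← List.rotate_mod, length_descList]

def seqPerm (n t : ℕ) : List ℕ := applyWord ((SEQ n).take t) (tau (descList n))

lemma length_flatten_replicate_gam_one (m : ℕ) :
    (List.replicate m (gam 1)).flatten.length = 2 * m := by
  simp [gam, mul_comm]

lemma SEQ_eq_append_false_cons {n m : ℕ} (hm : m ≤ n - 2) :
    ∃ rest, SEQ n = (List.replicate m (gam 1)).flatten ++ false :: rest := by
  obtain ⟨k, hk⟩ := Nat.exists_eq_add_of_le hm
  rw [SEQ, hk, List.replicate_add, List.flatten_append]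
  cases k with
  | zero => simp
  | succ k => simp [List.replicate_succ, gam]

lemma seqPerm_two_mul_eq_applyWord {n m : ℕ} (hm : m ≤ n - 2) :
    seqPerm n (2 * m) = applyWord (List.replicate m (gam 1)).flatten (tau (descList n)) := by
  obtain ⟨rest, h⟩ := SEQ_eq_append_false_cons hm
  rw [seqPerm, h, List.take_left' (length_flatten_replicate_gam_one m)]

lemma seqPerm_two_mul_add_one_eq_sig {n m : ℕ} (hm : m ≤ n - 2) :
    seqPerm n (2 * m + 1) = sig (seqPerm n (2 * m)) := by
  obtain ⟨rest, h⟩ := SEQ_eq_append_false_cons hm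
  rw [seqPerm_two_mul_eq_applyWord hm, seqPerm, h, ← length_flatten_replicate_gam_one m,
    List.take_length_add_append, applyWord_append]
  rfl

lemma applyWord_flatten_replicate_gam_one {n m : ℕ} (hn : 2 ≤ n) (hm : m ≤ n - 2) :
    applyWord (List.replicate m (gam 1)).flatten (tau (descList n)) =
      (n - 1 - m) :: n :: ((descList (n - 1)).rotate m).tail := by
  induction m with
  | zero =>
    rw [descList_eq_cons_pred (by omega : 0 < n), descList_eq_cons_pred (by omega : 0 < n - 1)]
    simp [applyWord, tau]
  | succ m ih =>
    have hrot := descList_rotate_eq_cons (k := n - 1) (m := m) (by omega)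
    rw [List.replicate_succ', List.flatten_append, applyWord_append, ih (by omega)]
    show tau (sig _) = _
    rw [sig_cons, List.cons_append, ← rotate_succ_of_rotate_eq_cons hrot,
      descList_rotate_eq_cons (k := n - 1) (m := m + 1) (by omega)]
    rfl

lemma seqPerm_two_mul {n m : ℕ} (hn : 2 ≤ n) (hm : m ≤ n - 2) :
    seqPerm n (2 * m) = (n - 1 - m) :: n :: ((descList (n - 1)).rotate m).tail := by
  rw [seqPerm_two_mul_eq_applyWord hm, applyWord_flatten_replicate_gam_one hn hm]

lemma seqPerm_two_mul_add_one {n m : ℕ} (hn : 2 ≤ n) (hm : m ≤ n - 2) :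
    seqPerm n (2 * m + 1) = n :: (descList (n - 1)).rotate (m + 1) := by
  rw [seqPerm_two_mul_add_one_eq_sig hm, seqPerm_two_mul hn hm, sig_cons, List.cons_append,
    ← rotate_succ_of_rotate_eq_cons (descList_rotate_eq_cons (by omega))]

lemma seqPerm_injOn {n : ℕ} (hn : 2 ≤ n) : Set.InjOn (seqPerm n) (Set.Iic (2 * n - 3)) := by
  intro s hs t ht hst
  simp only [Set.mem_Iic] at hs ht
  rcases Nat.even_or_odd' s with ⟨a, rfl | rfl⟩ <;> rcases Nat.even_or_odd' t with ⟨b, rfl | rfl⟩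
  · rw [seqPerm_two_mul hn (by omega), seqPerm_two_mul hn (by omega)] at hst
    simp only [List.cons.injEq] at hst
    omega
  · rw [seqPerm_two_mul hn (by omega), seqPerm_two_mul_add_one hn (by omega)] at hst
    simp only [List.cons.injEq] at hst
    omega
  · rw [seqPerm_two_mul_add_one hn (by omega), seqPerm_two_mul hn (by omega)] at hst
    simp only [List.cons.injEq] at hst
    omega
  · rw [seqPerm_two_mul_add_one hn (by omega), seqPerm_two_mul_add_one hn (by omega),
      List.cons_inj_right, ← List.rotate_rotate, ← List.rotate_rotate] at hst
    rw [descList_rotate_inj (by omega) (by omega) (List.rotate_injective 1 hst)]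

lemma rank_seqPerm {n t : ℕ} (hn : 2 ≤ n) (ht : t ≤ 2 * n - 3) : rank n (seqPerm n t) = t := by
  have hmem : t ∈ {s | seqPerm n s = seqPerm n t} := rfl
  have hle : rank n (seqPerm n t) ≤ t := Nat.sInf_le hmem
  exact seqPerm_injOn hn (hle.trans ht) ht (Nat.sInf_mem ⟨t, hmem⟩)

lemma rank_descList {n : ℕ} (hn : 2 ≤ n) : rank n (descList n) = 2 * n - 3 := by
  have hdesc : seqPerm n (2 * (n - 2) + 1) = descList n := by
    rw [seqPerm_two_mul_add_one hn le_rfl, show n - 2 + 1 = (descList (n - 1)).length by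
      rw [length_descList]; omega, List.rotate_length, ← descList_eq_cons_pred (by omega)]
  rw [← hdesc, rank_seqPerm hn (by omega)]
  omega

lemma rank_cons_rotate_descList {n j : ℕ} (hn : 2 ≤ n) (hj : 0 < j) (hjn : j < n - 1) :
    rank n (n :: (descList (n - 1)).rotate j) = 2 * j - 1 := by
  obtain ⟨m, rfl⟩ := Nat.exists_eq_add_of_lt hj
  rw [← seqPerm_two_mul_add_one hn (by omega), rank_seqPerm hn (by omega)]
  omega

lemma rank_cons_cons_tail_rotate_descList {n j : ℕ} (hn : 2 ≤ n) (hjn : j < n - 1) :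
    rank n ((n - 1 - j) :: n :: ((descList (n - 1)).rotate j).tail) = 2 * j := by
  rw [← seqPerm_two_mul hn (by omega), rank_seqPerm hn (by omega)]

theorem rank_of_starting_path_general (n : ℕ) (hn : 5 ≤ n) (π : List ℕ)
    (hdel : ∃ j, π.erase n = (descList (n - 1)).rotate j)
    (hpos : π.getD 0 0 = n ∨ π.getD 1 0 = n) :
    rank n π =
      if π = descList n then 2 * n - 3
      else if π.getD 0 0 = n then 2 * (n - π.getD 1 0 - 1) - 1
      else 2 * (n - π.getD 0 0 - 1) := by
  have hn2 : 2 ≤ n := by omega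
  obtain ⟨j, hjn, hπj⟩ := exists_lt_erase_eq_rotate hn2 hdel
  have hrot := descList_rotate_eq_cons hjn
  have ne_descList (ρ : List ℕ) (h : ρ.getD 1 0 ≠ n - 1) : ρ ≠ descList n :=
    fun hρ => h (hρ ▸ descList_getD_one hn2)
  by_cases h0 : π.getD 0 0 = n
  · obtain ⟨ρ, rfl⟩ : ∃ ρ, π = n :: ρ := ⟨_, List.eq_cons_of_getD_zero (by omega) h0⟩
    rw [List.erase_cons_head] at hπj
    subst hπj
    rcases Nat.eq_zero_or_pos j with rfl | hj0
    · rw [List.rotate_zero, ← descList_eq_cons_pred (by omega), if_pos rfl, rank_descList hn2]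
    · have hp : (n :: (descList (n - 1)).rotate j).getD 1 0 = n - 1 - j := by rw [hrot]; rfl
      rw [if_neg (ne_descList _ (by rw [hp]; omega)), if_pos h0, hp, rank_cons_rotate_descList hn2 hj0 hjn]
      omega
  · obtain ⟨p, rest, rfl⟩ :=
      List.exists_eq_cons_cons_of_getD_one (by omega) (hpos.resolve_left h0)
    rw [List.erase_cons_tail (by simpa using h0), List.erase_cons_head, hrot,
      List.cons.injEq] at hπj
    obtain ⟨rfl, rfl⟩ := hπj
    rw [if_neg (ne_descList _ (by change n ≠ n - 1; omega)), if_neg h0, List.getD_cons_zero,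
      rank_cons_cons_tail_rotate_descList hn2 hjn]
    omega

/-- ranks of the permutations of the starting path: those π in
which deleting the entry n leaves a cyclic shift of (n−1, …, 1) and n occupies
position 1 or 2. -/
theorem rank_of_starting_path (n : ℕ) (hn : 5 ≤ n) (π : List ℕ)
    (hπ : IsPerm n π)
    (hdel : ∃ j, π.erase n = (descList (n - 1)).rotate j)
    (hpos : π.getD 0 0 = n ∨ π.getD 1 0 = n) :
    rank n π =
      if π = descList n then 2 * n - 3
      else if π.getD 0 0 = n then 2 * (n - π.getD 1 0 - 1) - 1
      else 2 * (n - π.getD 0 0 - 1) :=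
  rank_of_starting_path_general n hn π hdel hpos
end
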